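/- For every t ∈ ℝ and every (u,v,w) ∈ ℝ³ with w ≠ 0, the map exp^{(t)} : ℝ³ → ℝ³ is differentiable at (u,v,w) and the determinant of its derivative there equals 4t(u² − v²) · (sinh(wt/2)/w) · ((wt/2)·cosh(wt/2) − sinh(wt/2))/w³. -/

import Mathlib

/-!
Away from `w = 0` the map `heisExp t` agrees near `(u, v, w)` with its closed formula, which is
smooth there; the columns of its derivative are the three partial derivatives of that formula.
Writing `sinh (w * t)` and `cosh (w * t)` through `E = exp (w * t / 2)` (so that
`exp (w * t) = E ^ 2`) turns the expanded `3 × 3` determinant identity into an identity of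
rational functions in `E`.
-/

open Real

/-- The sub-Lorentzian exponential map of the Heisenberg group at time `t`. -/
noncomputable def heisExp (t : ℝ) (p : ℝ × ℝ × ℝ) : ℝ × ℝ × ℝ :=
  if p.2.2 = 0 then (p.1 * t, p.2.1 * t, 0)
  else
    ((p.2.1 * (Real.cosh (p.2.2 * t) - 1) + p.1 * Real.sinh (p.2.2 * t)) / p.2.2,
     (p.2.1 * Real.sinh (p.2.2 * t) + p.1 * (Real.cosh (p.2.2 * t) - 1)) / p.2.2,
     ((p.1^2 - p.2.1^2) / 2) * ((Real.sinh (p.2.2 * t) - p.2.2 * t) / p.2.2^2))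

namespace Module.Basis

noncomputable def finThreeProd (R : Type*) [CommRing R] : Basis (Fin 3) R (R × R × R) :=
  .ofEquivFun <| ((LinearEquiv.refl R R).prodCongr (LinearEquiv.finTwoArrow R R).symm).trans
    (Fin.consLinearEquiv R fun _ : Fin 3 => R)

end Module.Basis

theorem LinearMap.det_prod_three {R : Type*} [CommRing R] (f : (R × R × R) →ₗ[R] R × R × R) :
    LinearMap.det f = Matrix.det !![(f (1, 0, 0)).1, (f (0, 1, 0)).1, (f (0, 0, 1)).1;
      (f (1, 0, 0)).2.1, (f (0, 1, 0)).2.1, (f (0, 0, 1)).2.1;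
      (f (1, 0, 0)).2.2, (f (0, 1, 0)).2.2, (f (0, 0, 1)).2.2] := by
  rw [← LinearMap.det_toMatrix (Module.Basis.finThreeProd R)]
  congr 1
  ext i j
  fin_cases i <;> fin_cases j <;> rfl

section heisExp

variable (t : ℝ) {u v w : ℝ}

theorem heisExp_of_ne_zero (hw : w ≠ 0) :
    heisExp t (u, v, w) =
      ((v * (cosh (w * t) - 1) + u * sinh (w * t)) / w,
       (v * sinh (w * t) + u * (cosh (w * t) - 1)) / w,
       ((u ^ 2 - v ^ 2) / 2) * ((sinh (w * t) - w * t) / w ^ 2)) :=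
  if_neg hw

theorem differentiableAt_heisExp (hw : w ≠ 0) : DifferentiableAt ℝ (heisExp t) (u, v, w) := by
  have hev : heisExp t =ᶠ[nhds (u, v, w)] fun p ↦
      ((p.2.1 * (cosh (p.2.2 * t) - 1) + p.1 * sinh (p.2.2 * t)) / p.2.2,
       (p.2.1 * sinh (p.2.2 * t) + p.1 * (cosh (p.2.2 * t) - 1)) / p.2.2,
       ((p.1 ^ 2 - p.2.1 ^ 2) / 2) * ((sinh (p.2.2 * t) - p.2.2 * t) / p.2.2 ^ 2)) := by
    filter_upwards [continuous_snd.snd.continuousAt.eventually_ne hw] with p hp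
    exact if_neg hp
  refine DifferentiableAt.congr_of_eventuallyEq ?_ hev
  fun_prop (disch := simpa)

theorem hasDerivAt_heisExp_fst (hw : w ≠ 0) :
    HasDerivAt (fun s ↦ heisExp t (s, v, w))
      (sinh (w * t) / w, (cosh (w * t) - 1) / w, u * (sinh (w * t) - w * t) / w ^ 2) u := by
  simp only [heisExp_of_ne_zero t hw]
  refine (((hasDerivAt_id' u).mul_const _).const_add _ |>.div_const w).prodMk
    ((((hasDerivAt_id' u).mul_const _).const_add _ |>.div_const w).prodMk
    ((((hasDerivAt_pow 2 u).sub_const _).div_const 2).mul_const _)) |>.congr_deriv ?_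
  simp only [Prod.mk.injEq]
  refine ⟨?_, ?_, ?_⟩ <;> ring

theorem hasDerivAt_heisExp_snd_fst (hw : w ≠ 0) :
    HasDerivAt (fun s ↦ heisExp t (u, s, w))
      ((cosh (w * t) - 1) / w, sinh (w * t) / w, -(v * (sinh (w * t) - w * t) / w ^ 2)) v := by
  simp only [heisExp_of_ne_zero t hw]
  refine ((((hasDerivAt_id' v).mul_const _).add_const _).div_const w).prodMk
    (((((hasDerivAt_id' v).mul_const _).add_const _).div_const w).prodMk
    ((((hasDerivAt_pow 2 v).const_sub _).div_const 2).mul_const _)) |>.congr_deriv ?_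
  simp only [Prod.mk.injEq]
  refine ⟨?_, ?_, ?_⟩ <;> ring

theorem hasDerivAt_heisExp_snd_snd (hw : w ≠ 0) :
    HasDerivAt (fun s ↦ heisExp t (u, v, s))
      (t * (v * sinh (w * t) + u * cosh (w * t)) / w -
          (v * (cosh (w * t) - 1) + u * sinh (w * t)) / w ^ 2,
       t * (v * cosh (w * t) + u * sinh (w * t)) / w -
          (v * sinh (w * t) + u * (cosh (w * t) - 1)) / w ^ 2,
       (u ^ 2 - v ^ 2) / 2 * (t * (cosh (w * t) - 1) / w ^ 2 - 2 * (sinh (w * t) - w * t) / w ^ 3))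
      w := by
  have hev : (fun s ↦ heisExp t (u, v, s)) =ᶠ[nhds w] fun s ↦
      ((v * (cosh (s * t) - 1) + u * sinh (s * t)) / s,
       (v * sinh (s * t) + u * (cosh (s * t) - 1)) / s,
       ((u ^ 2 - v ^ 2) / 2) * ((sinh (s * t) - s * t) / s ^ 2)) := by
    filter_upwards [eventually_ne_nhds hw] with s hs
    exact heisExp_of_ne_zero t hs
  refine HasDerivAt.congr_of_eventuallyEq ?_ hev
  have hst : HasDerivAt (fun s ↦ s * t) t w := by simpa using (hasDerivAt_id w).mul_const t
  have hS := hst.sinh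
  have hC := hst.cosh
  refine (((hC.sub_const 1).const_mul v).add (hS.const_mul u) |>.div (hasDerivAt_id w) hw).prodMk
    ((((hS.const_mul v).add ((hC.sub_const 1).const_mul u)).div (hasDerivAt_id w) hw).prodMk
    (((hS.sub hst).div (hasDerivAt_pow 2 w) (pow_ne_zero 2 hw)).const_mul _)) |>.congr_deriv ?_
  simp only [id, Pi.add_apply, Pi.sub_apply, Prod.mk.injEq]
  exact ⟨by field_simp, by field_simp, by field_simp; ring⟩

end heisExp

theorem det_heisExp_partials (t u v w : ℝ) (hw : w ≠ 0) :
    Matrix.det !![sinh (w * t) / w, (cosh (w * t) - 1) / w,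
        t * (v * sinh (w * t) + u * cosh (w * t)) / w -
          (v * (cosh (w * t) - 1) + u * sinh (w * t)) / w ^ 2;
      (cosh (w * t) - 1) / w, sinh (w * t) / w,
        t * (v * cosh (w * t) + u * sinh (w * t)) / w -
          (v * sinh (w * t) + u * (cosh (w * t) - 1)) / w ^ 2;
      u * (sinh (w * t) - w * t) / w ^ 2, -(v * (sinh (w * t) - w * t) / w ^ 2),
        (u ^ 2 - v ^ 2) / 2 *
          (t * (cosh (w * t) - 1) / w ^ 2 - 2 * (sinh (w * t) - w * t) / w ^ 3)] =
      4 * t * (u ^ 2 - v ^ 2) * (sinh (w * t / 2) / w) *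
        ((w * t / 2 * cosh (w * t / 2) - sinh (w * t / 2)) / w ^ 3) := by
  have hexp : exp (w * t) = exp (w * t / 2) ^ 2 := by rw [← exp_nat_mul]; ring_nf
  simp only [Matrix.det_fin_three, Matrix.of_apply, Matrix.cons_val', Matrix.cons_val_zero,
    Matrix.cons_val_fin_one, Matrix.cons_val_one, Matrix.cons_val]
  simp only [sinh_eq, cosh_eq, exp_neg, hexp]
  field_simp
  ring

/-- for `w ≠ 0`, the map `exp^{(t)}` is differentiable at `(u,v,w)`
and the determinant of its derivative there equals
`4t(u² − v²)·(sinh(wt/2)/w)·((wt/2)cosh(wt/2) − sinh(wt/2))/w³`. -/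
theorem heisExp_jacobian (t u v w : ℝ) (hw : w ≠ 0) :
    DifferentiableAt ℝ (heisExp t) (u, v, w) ∧
    (fderiv ℝ (heisExp t) (u, v, w)).det =
      4 * t * (u^2 - v^2) * (Real.sinh (w * t / 2) / w) *
        (((w * t / 2) * Real.cosh (w * t / 2) - Real.sinh (w * t / 2)) / w^3) := by
  have hF := (differentiableAt_heisExp t (u := u) (v := v) hw).hasFDerivAt
  have h₁ : fderiv ℝ (heisExp t) (u, v, w) (1, 0, 0) = _ :=
    ((hasDerivAt_heisExp_fst t hw).unique (hF.comp_hasDerivAt (l := heisExp t) u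
      ((hasDerivAt_id' u).prodMk (hasDerivAt_const u (v, w))))).symm
  have h₂ : fderiv ℝ (heisExp t) (u, v, w) (0, 1, 0) = _ :=
    ((hasDerivAt_heisExp_snd_fst t hw).unique (hF.comp_hasDerivAt (l := heisExp t) v
      ((hasDerivAt_const v u).prodMk ((hasDerivAt_id' v).prodMk (hasDerivAt_const v w))))).symm
  have h₃ : fderiv ℝ (heisExp t) (u, v, w) (0, 0, 1) = _ :=
    ((hasDerivAt_heisExp_snd_snd t hw).unique (hF.comp_hasDerivAt (l := heisExp t) w
      ((hasDerivAt_const w u).prodMk ((hasDerivAt_const w v).prodMk (hasDerivAt_id' w))))).symm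
  refine ⟨hF.differentiableAt, ?_⟩
  rw [ContinuousLinearMap.det, LinearMap.det_prod_three]
  simp only [ContinuousLinearMap.coe_coe, h₁, h₂, h₃]
  exact det_heisExp_partials t u v w hw
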